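/- Let p ∈ [1,∞) and let (X,d_X), (Y,d_Y) be nonempty compact metric spaces each satisfying the p-triangle inequality. Then inf over correspondences R of sup_{(x,y),(x',y')∈R} Λ_p( d_X^{(∞)}(x,x'), d_Y^{(∞)}(y,y') ) ≤ inf over correspondences R of sup_{(x,y),(x',y')∈R} Λ_p( d_X(x,x'), d_Y(y,y') ); that is, the subdominant-ultrametric projection 𝔖_∞ is 1-Lipschitz with respect to d_GH^{(p)}: d_GH^{(p)}(𝔖_∞X, 𝔖_∞Y) ≤ d_GH^{(p)}(X,Y). -/

import Mathlib

/-!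
If a correspondence `R` has `p`-distortion at most `ε`, then `d_Y(y,y')^p ≤ d_X(x,x')^p + ε^p`
for all `(x,y), (x',y') ∈ R`. Lifting a chain `x = x_0, …, x_n = x'` along `R` step by step gives
a chain from `y` to `y'` whose steps obey the same bound, so
`d_Y^{(∞)}(y,y')^p ≤ d_X^{(∞)}(x,x')^p + ε^p`, and symmetrically. Hence every correspondence has
`p`-distortion at most `ε` for the subdominant ultrametrics as well.
-/

open scoped NNReal

noncomputable section

/-- A correspondence between `X` and `Y`. -/
def IsCorrespondence {X Y : Type*} (R : Set (X × Y)) : Prop :=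
  (∀ x : X, ∃ y : Y, (x, y) ∈ R) ∧ ∀ y : Y, ∃ x : X, (x, y) ∈ R

/-- `Λ_p(a,b) = |a^p - b^p|^(1/p)`. -/
def lambdaP (p a b : ℝ) : ℝ := |a ^ p - b ^ p| ^ (1 / p)

/-- The subdominant ultrametric construction `d^{(∞)}`: the infimum over finite chains
`x = x_0, x_1, …, x_n = x'` of `max_{0 ≤ i < n} d(x_i, x_{i+1})`. -/
def subUltra {X : Type*} [MetricSpace X] (x x' : X) : ℝ :=
  sInf {r : ℝ | ∃ n : ℕ, ∃ c : ℕ → X, c 0 = x ∧ c n = x' ∧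
    NNReal.toReal ((Finset.range n).sup fun i => nndist (c i) (c (i + 1))) = r}

section Chains

variable {Z : Type*} [MetricSpace Z]

def chainCosts (x x' : Z) : Set ℝ :=
  {r : ℝ | ∃ n : ℕ, ∃ c : ℕ → Z, c 0 = x ∧ c n = x' ∧
    NNReal.toReal ((Finset.range n).sup fun i => nndist (c i) (c (i + 1))) = r}

lemma nonneg_of_mem_chainCosts {x x' : Z} {r : ℝ} (hr : r ∈ chainCosts x x') : 0 ≤ r := by
  obtain ⟨n, c, -, -, rfl⟩ := hr
  exact NNReal.coe_nonneg _

lemma dist_mem_chainCosts (x x' : Z) : dist x x' ∈ chainCosts x x' :=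
  ⟨1, fun i => if i = 0 then x else x', rfl, rfl, by simp [← coe_nndist]⟩

lemma subUltra_nonneg (x x' : Z) : 0 ≤ subUltra x x' :=
  Real.sInf_nonneg fun _ => nonneg_of_mem_chainCosts

lemma subUltra_mem_closure_chainCosts (x x' : Z) : subUltra x x' ∈ closure (chainCosts x x') :=
  csInf_mem_closure ⟨_, dist_mem_chainCosts x x'⟩ ⟨0, fun _ => nonneg_of_mem_chainCosts⟩

lemma subUltra_le_of_chain {x x' : Z} {B : ℝ} (hB : 0 ≤ B) (n : ℕ) (c : ℕ → Z)
    (h0 : c 0 = x) (hn : c n = x') (hc : ∀ i < n, dist (c i) (c (i + 1)) ≤ B) :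
    subUltra x x' ≤ B := by
  refine (csInf_le ⟨0, fun _ => nonneg_of_mem_chainCosts⟩ ⟨n, c, h0, hn, rfl⟩).trans ?_
  rw [← Real.coe_toNNReal B hB, NNReal.coe_le_coe]
  refine Finset.sup_le fun i hi => ?_
  rw [Real.le_toNNReal_iff_coe_le hB, coe_nndist]
  exact hc i (Finset.mem_range.1 hi)

/-- Padding a chain with a constant last step makes it nonempty, which is what allows lifting it
along a correspondence with prescribed endpoints. -/
lemma exists_succ_chain_of_mem_chainCosts {x x' : Z} {r : ℝ} (hr : r ∈ chainCosts x x') :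
    ∃ n : ℕ, ∃ c : ℕ → Z, c 0 = x ∧ c (n + 1) = x' ∧ ∀ i ≤ n, dist (c i) (c (i + 1)) ≤ r := by
  obtain ⟨n, c, h0, hn, hrc⟩ := id hr
  refine ⟨n, fun i => c (min i n), by simpa using h0, by simpa using hn, fun i hi => ?_⟩
  rcases hi.lt_or_eq with hi | rfl
  · show dist (c (min i n)) (c (min (i + 1) n)) ≤ r
    rw [min_eq_left hi.le, min_eq_left hi, ← hrc, dist_nndist, NNReal.coe_le_coe]
    exact Finset.le_sup (f := fun i => nndist (c i) (c (i + 1))) (Finset.mem_range.2 hi)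
  · simpa using nonneg_of_mem_chainCosts hr

end Chains

lemma exists_chain_lift {X Y : Type*} {R : Set (X × Y)} (hR : ∀ x, ∃ y, (x, y) ∈ R)
    (n : ℕ) (c : ℕ → X) {y y' : Y} (h0 : (c 0, y) ∈ R) (hn : (c (n + 1), y') ∈ R) :
    ∃ c' : ℕ → Y, c' 0 = y ∧ c' (n + 1) = y' ∧ ∀ i, (c i, c' i) ∈ R := by
  choose g hg using hR
  refine ⟨fun i => if i = 0 then y else if i = n + 1 then y' else g (c i), by simp, by simp,
    fun i => ?_⟩
  dsimp only
  split_ifs with h₀ hₙ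
  · exact h₀ ▸ h0
  · exact hₙ ▸ hn
  · exact hg _

section Transfer

variable {X Y : Type*} [MetricSpace X] [MetricSpace Y] {R : Set (X × Y)} {p c : ℝ}

lemma subUltra_rpow_le_of_mem_chainCosts (hp : 0 < p) (hc : 0 ≤ c)
    (hR : ∀ x, ∃ y, (x, y) ∈ R)
    (hd : ∀ a ∈ R, ∀ b ∈ R, dist a.2 b.2 ^ p ≤ dist a.1 b.1 ^ p + c)
    {a b : X × Y} (ha : a ∈ R) (hb : b ∈ R) {r : ℝ} (hr : r ∈ chainCosts a.1 b.1) :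
    subUltra a.2 b.2 ^ p ≤ r ^ p + c := by
  have hr0 := nonneg_of_mem_chainCosts hr
  obtain ⟨n, γ, h0, hn, hγ⟩ := exists_succ_chain_of_mem_chainCosts hr
  obtain ⟨γ', h0', hn', hγR⟩ :=
    exists_chain_lift hR n γ (h0 ▸ ha : (γ 0, a.2) ∈ R) (hn ▸ hb : (γ (n + 1), b.2) ∈ R)
  have hstep : ∀ i < n + 1, dist (γ' i) (γ' (i + 1)) ≤ (r ^ p + c) ^ p⁻¹ := by
    intro i hi
    rw [Real.le_rpow_inv_iff_of_pos dist_nonneg (by positivity) hp]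
    calc dist (γ' i) (γ' (i + 1)) ^ p ≤ dist (γ i) (γ (i + 1)) ^ p + c :=
          hd _ (hγR i) _ (hγR (i + 1))
      _ ≤ r ^ p + c := by
          gcongr
          exact hγ i (Nat.lt_succ_iff.1 hi)
  have := subUltra_le_of_chain (by positivity) (n + 1) γ' h0' hn' hstep
  rwa [← Real.le_rpow_inv_iff_of_pos (subUltra_nonneg _ _) (by positivity) hp]

/-- The chain bound passes to the infimum because `r ↦ r ^ p + c` is continuous. -/
lemma subUltra_rpow_le_rpow_add (hp : 0 < p) (hc : 0 ≤ c)
    (hR : ∀ x, ∃ y, (x, y) ∈ R)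
    (hd : ∀ a ∈ R, ∀ b ∈ R, dist a.2 b.2 ^ p ≤ dist a.1 b.1 ^ p + c)
    {a b : X × Y} (ha : a ∈ R) (hb : b ∈ R) :
    subUltra a.2 b.2 ^ p ≤ subUltra a.1 b.1 ^ p + c := by
  have hclosed : IsClosed {r : ℝ | subUltra a.2 b.2 ^ p ≤ r ^ p + c} :=
    isClosed_le continuous_const ((Real.continuous_rpow_const hp.le).add continuous_const)
  exact hclosed.closure_subset_iff.2
    (fun _ => subUltra_rpow_le_of_mem_chainCosts hp hc hR hd ha hb)
    (subUltra_mem_closure_chainCosts _ _)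

lemma abs_subUltra_rpow_sub_le (hp : 0 < p) (hR : IsCorrespondence R)
    (hd : ∀ a ∈ R, ∀ b ∈ R, |dist a.1 b.1 ^ p - dist a.2 b.2 ^ p| ≤ c)
    {a b : X × Y} (ha : a ∈ R) (hb : b ∈ R) :
    |subUltra a.1 b.1 ^ p - subUltra a.2 b.2 ^ p| ≤ c := by
  have hc : 0 ≤ c := (abs_nonneg _).trans (hd a ha a ha)
  have hd₁ (a : X × Y) (ha : a ∈ R) (b : X × Y) (hb : b ∈ R) :
      dist a.2 b.2 ^ p ≤ dist a.1 b.1 ^ p + c := by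
    linarith [(abs_sub_le_iff.1 (hd a ha b hb)).2]
  have hd₂ (a : Y × X) (ha : a.swap ∈ R) (b : Y × X) (hb : b.swap ∈ R) :
      dist a.2 b.2 ^ p ≤ dist a.1 b.1 ^ p + c := by
    have h : |dist a.2 b.2 ^ p - dist a.1 b.1 ^ p| ≤ c := hd _ ha _ hb
    linarith [(abs_sub_le_iff.1 h).1]
  have h₁ : subUltra a.2 b.2 ^ p ≤ subUltra a.1 b.1 ^ p + c :=
    subUltra_rpow_le_rpow_add hp hc hR.1 hd₁ ha hb
  have h₂ : subUltra a.1 b.1 ^ p ≤ subUltra a.2 b.2 ^ p + c :=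
    subUltra_rpow_le_rpow_add (R := Prod.swap ⁻¹' R) hp hc hR.2 hd₂ (a := a.swap) ha
      (b := b.swap) hb
  exact abs_sub_le_iff.2 ⟨by linarith, by linarith⟩

end Transfer

section LambdaP

variable {p a b E : ℝ}

lemma lambdaP_nonneg : 0 ≤ lambdaP p a b :=
  Real.rpow_nonneg (abs_nonneg _) _

lemma lambdaP_le_iff (hp : 0 < p) (hE : 0 ≤ E) : lambdaP p a b ≤ E ↔ |a ^ p - b ^ p| ≤ E ^ p := by
  rw [lambdaP, one_div, Real.rpow_inv_le_iff_of_pos (abs_nonneg _) hE hp]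

lemma lambdaP_le_max (hp : 0 < p) (ha : 0 ≤ a) (hb : 0 ≤ b) : lambdaP p a b ≤ max a b := by
  rw [lambdaP_le_iff hp (ha.trans (le_max_left a b))]
  exact abs_sub_le_of_nonneg_of_le (by positivity)
    (Real.rpow_le_rpow ha (le_max_left a b) hp.le) (by positivity)
    (Real.rpow_le_rpow hb (le_max_right a b) hp.le)

end LambdaP

lemma bddAbove_lambdaP_dist {X Y : Type*} [MetricSpace X] [MetricSpace Y]
    [BoundedSpace X] [BoundedSpace Y] {p : ℝ} (hp : 0 < p) (R : Set (X × Y)) :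
    BddAbove {s : ℝ | ∃ a ∈ R, ∃ b ∈ R, s = lambdaP p (dist a.1 b.1) (dist a.2 b.2)} := by
  obtain ⟨CX, hCX⟩ := Metric.boundedSpace_iff.1 (inferInstance : BoundedSpace X)
  obtain ⟨CY, hCY⟩ := Metric.boundedSpace_iff.1 (inferInstance : BoundedSpace Y)
  refine ⟨max CX CY, ?_⟩
  rintro _ ⟨a, -, b, -, rfl⟩
  exact (lambdaP_le_max hp dist_nonneg dist_nonneg).trans (max_le_max (hCX _ _) (hCY _ _))

lemma lambdaP_subUltra_le {X Y : Type*} [MetricSpace X] [MetricSpace Y] {p E : ℝ}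
    (hp : 0 < p) (hE : 0 ≤ E) {R : Set (X × Y)} (hR : IsCorrespondence R)
    (hd : ∀ a ∈ R, ∀ b ∈ R, lambdaP p (dist a.1 b.1) (dist a.2 b.2) ≤ E)
    {a b : X × Y} (ha : a ∈ R) (hb : b ∈ R) :
    lambdaP p (subUltra a.1 b.1) (subUltra a.2 b.2) ≤ E := by
  simp only [lambdaP_le_iff hp hE] at hd ⊢
  exact abs_subUltra_rpow_sub_le hp hR hd ha hb

/-- When no index satisfies `P`, both sides are `sInf ∅ = 0`. -/
lemma sInf_le_sInf_of_forall_le {ι : Type*} {P : ι → Prop} {f g : ι → ℝ}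
    (hf : ∀ i, P i → 0 ≤ f i) (hfg : ∀ i, P i → f i ≤ g i) :
    sInf {r | ∃ i, P i ∧ r = f i} ≤ sInf {r | ∃ i, P i ∧ r = g i} := by
  by_cases hP : ∃ i, P i
  · obtain ⟨i₀, hi₀⟩ := hP
    refine le_csInf ⟨_, i₀, hi₀, rfl⟩ ?_
    rintro _ ⟨i, hi, rfl⟩
    exact csInf_le_of_le ⟨0, by rintro _ ⟨j, hj, rfl⟩; exact hf j hj⟩ ⟨i, hi, rfl⟩ (hfg i hi)
  · push Not at hP
    have hempty : ∀ h : ι → ℝ, {r | ∃ i, P i ∧ r = h i} = ∅ := fun h =>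
      Set.eq_empty_of_forall_notMem fun _ ⟨i, hi, _⟩ => hP i hi
    rw [hempty, hempty]

theorem subUltra_stable_dGHp_general (p : ℝ) (hp : 1 ≤ p)
    (X Y : Type)
    [MetricSpace X] [CompactSpace X]
    [MetricSpace Y] [CompactSpace Y] :
    sInf {r : ℝ | ∃ R : Set (X × Y), IsCorrespondence R ∧
        r = sSup {s : ℝ | ∃ a ∈ R, ∃ b ∈ R,
          s = lambdaP p (subUltra a.1 b.1) (subUltra a.2 b.2)}} ≤
      sInf {r : ℝ | ∃ R : Set (X × Y), IsCorrespondence R ∧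
        r = sSup {s : ℝ | ∃ a ∈ R, ∃ b ∈ R,
          s = lambdaP p (dist a.1 b.1) (dist a.2 b.2)}} := by
  have hp0 : 0 < p := zero_lt_one.trans_le hp
  refine sInf_le_sInf_of_forall_le
    (fun R _ => Real.sSup_nonneg (by rintro _ ⟨a, -, b, -, rfl⟩; exact lambdaP_nonneg))
    fun R hR => ?_
  have hE : 0 ≤ sSup {s : ℝ | ∃ a ∈ R, ∃ b ∈ R, s = lambdaP p (dist a.1 b.1) (dist a.2 b.2)} :=
    Real.sSup_nonneg (by rintro _ ⟨a, -, b, -, rfl⟩; exact lambdaP_nonneg)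
  refine Real.sSup_le ?_ hE
  rintro _ ⟨a, ha, b, hb, rfl⟩
  exact lambdaP_subUltra_le hp0 hE hR
    (fun a ha b hb => le_csSup (bddAbove_lambdaP_dist hp0 R) ⟨a, ha, b, hb, rfl⟩) ha hb

/-- Stability of the subdominant-ultrametric projection `𝔖_∞` with respect to
`d_GH^{(p)}` on compact `p`-metric spaces: the infimal `p`-distortion of correspondences
measured with the subdominant ultrametrics is at most the one measured with the original
metrics, i.e. `d_GH^{(p)}(𝔖_∞X, 𝔖_∞Y) ≤ d_GH^{(p)}(X,Y)`. -/
theorem subUltra_stable_dGHp (p : ℝ) (hp : 1 ≤ p)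
    (X Y : Type)
    [MetricSpace X] [CompactSpace X] [Nonempty X]
    [MetricSpace Y] [CompactSpace Y] [Nonempty Y]
    (hX : ∀ x y z : X, dist x z ^ p ≤ dist x y ^ p + dist y z ^ p)
    (hY : ∀ x y z : Y, dist x z ^ p ≤ dist x y ^ p + dist y z ^ p) :
    sInf {r : ℝ | ∃ R : Set (X × Y), IsCorrespondence R ∧
        r = sSup {s : ℝ | ∃ a ∈ R, ∃ b ∈ R,
          s = lambdaP p (subUltra a.1 b.1) (subUltra a.2 b.2)}} ≤
      sInf {r : ℝ | ∃ R : Set (X × Y), IsCorrespondence R ∧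
        r = sSup {s : ℝ | ∃ a ∈ R, ∃ b ∈ R,
          s = lambdaP p (dist a.1 b.1) (dist a.2 b.2)}} :=
  subUltra_stable_dGHp_general p hp X Y
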